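/- arXiv:1612.06210 — 10 statements merged into one kernel-verified Lean document; each statement's English description precedes it below -/
import Mathlib

section
/- For N ≥ 0 and n ≥ 1, the hypergeometric Euler number satisfies E_{N,2n} = (2n)! · Σ_{r=1}^n (-1)^r Σ_{i_1+⋯+i_r=n, i_j ≥ 1} ((2N)!)^r / ((2N+2i_1)! ⋯ (2N+2i_r)!). -/
/-!
With `g n = E_{N,2n} / (2n)!` and `a k = (2N)! / (2N+2k)!`, the recurrence says that
`∑ g n xⁿ` is the inverse of the power series `1 + A`, `A = ∑_{k ≥ 1} a k xᵏ`. Expanding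
`(1 + A)⁻¹ = ∑ (-A)ʳ`, the coefficient of `xⁿ` in `Aʳ` is the sum over compositions of `n` into
`r` positive parts of `a c₁ ⋯ a cᵣ`. Without power series: these composition sums satisfy
`S (r+1) n = ∑_{i<n} a (n-i) S r i` (split off the first part), so the alternating sum of them
satisfies the same recurrence as `g`.
-/

open Finset
open scoped Nat

def compositionTuples (r n : ℕ) : Finset (Fin r → ℕ) :=
  (Nat.antidiagonalTuple r n).filter fun c => ∀ j, 1 ≤ c j

lemma compositionTuples_zero_zero : compositionTuples 0 0 = {![]} := by
  decide

lemma compositionTuples_zero_succ (n : ℕ) : compositionTuples 0 (n + 1) = ∅ := by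
  simp [compositionTuples, Nat.antidiagonalTuple_zero_succ]

lemma compositionTuples_eq_empty_of_lt {r n : ℕ} (h : n < r) : compositionTuples r n = ∅ := by
  refine filter_eq_empty_iff.2 fun c hc hpos => ?_
  rw [Nat.mem_antidiagonalTuple] at hc
  have : r ≤ n := calc
    r = ∑ _j : Fin r, 1 := by simp
    _ ≤ ∑ j, c j := sum_le_sum fun j _ => hpos j
    _ = n := hc
  omega

lemma mem_compositionTuples_succ {r n : ℕ} {c : Fin (r + 1) → ℕ} :
    c ∈ compositionTuples (r + 1) n ↔
      1 ≤ c 0 ∧ c 0 ≤ n ∧ Fin.tail c ∈ compositionTuples r (n - c 0) := by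
  simp only [compositionTuples, mem_filter, Nat.mem_antidiagonalTuple, Fin.sum_univ_succ,
    Fin.forall_fin_succ, Fin.tail]
  constructor
  · rintro ⟨hsum, h0, hpos⟩
    exact ⟨h0, by omega, by omega, hpos⟩
  · rintro ⟨h0, hle, hsum, hpos⟩
    exact ⟨by omega, h0, hpos⟩

variable {R : Type*} [CommRing R]

def compositionSum (a : ℕ → R) (r n : ℕ) : R :=
  ∑ c ∈ compositionTuples r n, ∏ j, a (c j)

lemma compositionSum_succ (a : ℕ → R) (r n : ℕ) :
    compositionSum a (r + 1) n = ∑ i ∈ range n, a (n - i) * compositionSum a r i := by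
  simp only [compositionSum, mul_sum]
  rw [sum_sigma']
  refine sum_nbij' (fun c => ⟨n - c 0, Fin.tail c⟩) (fun p => Fin.cons (n - p.1) p.2)
    ?_ ?_ ?_ ?_ ?_
  · intro c hc
    obtain ⟨h0, hle, htail⟩ := mem_compositionTuples_succ.1 hc
    simpa [htail] using ⟨by omega, by omega⟩
  · rintro ⟨i, d⟩ hd
    obtain ⟨hi, hd⟩ := mem_sigma.1 hd
    replace hi : i < n := mem_range.1 hi
    simp only [mem_compositionTuples_succ, Fin.cons_zero, Fin.tail_cons,
      Nat.sub_sub_self hi.le, hd, and_true]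
    omega
  · intro c hc
    obtain ⟨-, hle, -⟩ := mem_compositionTuples_succ.1 hc
    simp [Nat.sub_sub_self hle]
  · rintro ⟨i, d⟩ hd
    simp [Nat.sub_sub_self (mem_range.1 (mem_sigma.1 hd).1).le]
  · intro c hc
    obtain ⟨-, hle, -⟩ := mem_compositionTuples_succ.1 hc
    simp [Fin.prod_univ_succ, Nat.sub_sub_self hle, Fin.tail]

lemma compositionSum_zero_zero (a : ℕ → R) : compositionSum a 0 0 = 1 := by
  simp [compositionSum, compositionTuples_zero_zero]

lemma compositionSum_zero_succ (a : ℕ → R) (n : ℕ) : compositionSum a 0 (n + 1) = 0 := by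
  simp [compositionSum, compositionTuples_zero_succ]

lemma compositionSum_eq_zero_of_lt (a : ℕ → R) {r n : ℕ} (h : n < r) :
    compositionSum a r n = 0 := by
  simp [compositionSum, compositionTuples_eq_empty_of_lt h]

lemma sum_range_compositionSum_of_le (a f : ℕ → R) {n m : ℕ} (h : n ≤ m) :
    ∑ r ∈ range (n + 1), f r * compositionSum a r n =
      ∑ r ∈ range (m + 1), f r * compositionSum a r n := by
  refine sum_subset (range_subset_range.2 (by omega)) fun r _ hr => ?_
  rw [compositionSum_eq_zero_of_lt a (by simpa using hr), mul_zero]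

theorem eq_sum_compositionSum_of_recurrence (a g : ℕ → R) (h0 : g 0 = 1)
    (hrec : ∀ n, 1 ≤ n → g n = -∑ i ∈ range n, a (n - i) * g i) (n : ℕ) :
    g n = ∑ r ∈ range (n + 1), (-1) ^ r * compositionSum a r n := by
  induction n using Nat.strong_induction_on with
  | _ n ih =>
  rcases n with _ | n
  · simp [h0, compositionSum_zero_zero]
  rw [sum_range_succ', compositionSum_zero_succ, mul_zero, add_zero, hrec _ n.succ_pos]
  calc -∑ i ∈ range (n + 1), a (n + 1 - i) * g i
      = -∑ i ∈ range (n + 1), ∑ r ∈ range (n + 1),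
          a (n + 1 - i) * ((-1) ^ r * compositionSum a r i) := by
        refine congrArg Neg.neg (sum_congr rfl fun i hi => ?_)
        have hi : i < n + 1 := mem_range.1 hi
        rw [ih i hi, sum_range_compositionSum_of_le a _ (Nat.le_of_lt_succ hi), mul_sum]
    _ = ∑ r ∈ range (n + 1), (-1) ^ (r + 1) * compositionSum a (r + 1) (n + 1) := by
        rw [sum_comm, ← sum_neg_distrib]
        refine sum_congr rfl fun r _ => ?_
        rw [compositionSum_succ, mul_sum, ← sum_neg_distrib]
        exact sum_congr rfl fun i _ => by ring

theorem hypergeometric_euler_explicit_general (N : ℕ) (E : ℕ → ℝ)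
    (h0 : E 0 = 1)
    (hrec : ∀ n : ℕ, 1 ≤ n →
      E (2 * n) = -(Nat.factorial (2 * n) : ℝ) * (Nat.factorial (2 * N)) *
        ∑ i ∈ Finset.range n,
          E (2 * i) / ((Nat.factorial (2 * N + 2 * n - 2 * i) : ℝ) * (Nat.factorial (2 * i)))) :
    ∀ n : ℕ, 1 ≤ n →
      E (2 * n) = (Nat.factorial (2 * n) : ℝ) *
        ∑ r ∈ Finset.Icc 1 n, (-1 : ℝ) ^ r *
          ∑ c ∈ (Finset.Nat.antidiagonalTuple r n).filter (fun c => ∀ j, 1 ≤ c j),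
            ((Nat.factorial (2 * N) : ℝ)) ^ r / ∏ j, (Nat.factorial (2 * N + 2 * c j) : ℝ) := by
  set a : ℕ → ℝ := fun k => (2 * N)! / (2 * N + 2 * k)!
  have hfac (k : ℕ) : ((2 * k)! : ℝ) ≠ 0 := by positivity
  have hg := eq_sum_compositionSum_of_recurrence a (fun n => E (2 * n) / (2 * n)!)
    (by simp [h0]) fun n hn => by
      rw [hrec n hn, neg_mul, neg_mul, neg_div, mul_assoc, mul_div_cancel_left₀ _ (hfac n),
        mul_sum]
      refine congrArg Neg.neg (sum_congr rfl fun i hi => ?_)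
      rw [show 2 * N + 2 * n - 2 * i = 2 * N + 2 * (n - i) by have := mem_range.1 hi; omega]
      ring
  intro n hn
  obtain ⟨m, rfl⟩ : ∃ m, n = m + 1 := ⟨n - 1, by omega⟩
  rw [← div_mul_cancel₀ (E _) (hfac _), mul_comm, hg, Nat.range_succ_eq_Icc_zero,
    ← insert_Icc_add_one_left_eq_Icc (Nat.zero_le _), sum_insert (by simp),
    compositionSum_zero_succ, mul_zero, zero_add]
  refine congrArg _ (sum_congr rfl fun r _ => ?_)
  simp [compositionSum, compositionTuples, a, prod_div_distrib]

/-- For `N ≥ 0` and `n ≥ 1`,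
`E_{N,2n} = (2n)! ∑_{r=1}^n (-1)^r ∑_{i₁+⋯+i_r=n, i_j ≥ 1} ((2N)!)^r/((2N+2i₁)!⋯(2N+2i_r)!)`,
where the hypergeometric Euler numbers are given by `E_{N,0}=1`, the stated recurrence,
and `E_{N,n}=0` for odd `n`. -/
theorem hypergeometric_euler_explicit (N : ℕ) (E : ℕ → ℝ)
    (h0 : E 0 = 1)
    (hodd : ∀ n : ℕ, Odd n → E n = 0)
    (hrec : ∀ n : ℕ, 1 ≤ n →
      E (2 * n) = -(Nat.factorial (2 * n) : ℝ) * (Nat.factorial (2 * N)) *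
        ∑ i ∈ Finset.range n,
          E (2 * i) / ((Nat.factorial (2 * N + 2 * n - 2 * i) : ℝ) * (Nat.factorial (2 * i)))) :
    ∀ n : ℕ, 1 ≤ n →
      E (2 * n) = (Nat.factorial (2 * n) : ℝ) *
        ∑ r ∈ Finset.Icc 1 n, (-1 : ℝ) ^ r *
          ∑ c ∈ (Finset.Nat.antidiagonalTuple r n).filter (fun c => ∀ j, 1 ≤ c j),
            ((Nat.factorial (2 * N) : ℝ)) ^ r / ∏ j, (Nat.factorial (2 * N + 2 * c j) : ℝ) :=
  hypergeometric_euler_explicit_general N E h0 hrec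
end

section
/- For N ≥ 0 and even n ≥ 2, E_{N,n} = n! Σ_{k=1}^{n} (-1)^k C(n+1, k+1) Σ_{i_1,…,i_k ≥ 0, i_1+⋯+i_k = n/2} ((2N)!)^k / ((2N+2i_1)! ⋯ (2N+2i_k)!). -/
/-! With `A = ∑ᵢ (2N)!/(2N+2i)! xⁱ` and `u = ∑ᵢ E_{N,2i}/(2i)! xⁱ`, the recurrence says `A u = 1`.
As `A` has constant term `1`, `x^{n+1}` divides `(1 - A)^{n+1}`, so multiplying the identity
`1 - (1 - A)^{n+1} = A ∑_{k=0}^{n} (-1)^k C(n+1,k+1) Aᵏ` by `u` gives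
`u ≡ ∑_{k=0}^{n} (-1)^k C(n+1,k+1) Aᵏ  (mod x^{n+1})`. The coefficient of `x^{n/2}` in `Aᵏ` is the
sum over compositions of `n/2` into `k` parts, and the `k = 0` term contributes nothing. -/

open Finset PowerSeries

theorem PowerSeries.coeff_pow_eq_sum_antidiagonalTuple {R : Type*} [CommSemiring R]
    (f : R⟦X⟧) (k m : ℕ) :
    coeff m (f ^ k) = ∑ c ∈ Nat.antidiagonalTuple k m, ∏ j, coeff (c j) f := by
  classical
  rw [← Fin.prod_const, coeff_prod, finsuppAntidiag, sum_map,
    ← piAntidiag_univ_fin_eq_antidiagonalTuple]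
  exact sum_attach _ fun c : Fin k → ℕ => ∏ j, coeff (c j) f

theorem mul_sum_neg_one_pow_mul_choose_mul_pow {R : Type*} [CommRing R] (a : R) (n : ℕ) :
    a * ∑ k ∈ range (n + 1), (-1) ^ k * ((n + 1).choose (k + 1) : R) * a ^ k =
      1 - (1 - a) ^ (n + 1) := by
  rw [sub_eq_neg_add 1 a, add_pow, sum_range_succ' _ (n + 1), mul_sum]
  simp only [one_pow, mul_one, pow_zero, Nat.choose_zero_right, Nat.cast_one,
    sub_add_cancel_right, ← sum_neg_distrib]
  exact sum_congr rfl fun k _ => by ring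

theorem PowerSeries.coeff_eq_sum_neg_one_pow_mul_choose_mul_coeff_pow {R : Type*} [CommRing R]
    {f g : R⟦X⟧} (hfg : f * g = 1) (hf : constantCoeff f = 1) {m n : ℕ} (hm : 0 < m)
    (hmn : m ≤ n) :
    coeff m g = ∑ k ∈ Icc 1 n, (-1) ^ k * ((n + 1).choose (k + 1) : R) * coeff m (f ^ k) := by
  set S := ∑ k ∈ range (n + 1), (-1) ^ k * ((n + 1).choose (k + 1) : R⟦X⟧) * f ^ k
  have hg : g = S + g * (1 - f) ^ (n + 1) := by
    calc g = g * (f * S) + g * (1 - f) ^ (n + 1) := by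
          rw [mul_sum_neg_one_pow_mul_choose_mul_pow]; ring
      _ = S + g * (1 - f) ^ (n + 1) := by rw [← mul_assoc, mul_comm g, hfg, one_mul]
  have hX : X ^ (n + 1) ∣ g * (1 - f) ^ (n + 1) :=
    (pow_dvd_pow_of_dvd (X_dvd_iff.mpr (by simp [hf])) _).mul_left g
  rw [hg, map_add, X_pow_dvd_iff.mp hX m (by omega), add_zero, map_sum, range_eq_Ico,
    sum_eq_sum_Ico_succ_bot (by omega), Ico_add_one_right_eq_Icc]
  have hconst : coeff m ((-1) ^ 0 * ((n + 1).choose (0 + 1) : R⟦X⟧) * f ^ 0) = 0 := by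
    rw [pow_zero, pow_zero, one_mul, mul_one, ← map_natCast (C (R := R)), coeff_C, if_neg hm.ne']
  rw [hconst, zero_add]
  refine sum_congr rfl fun k _ => ?_
  rw [← coeff_C_mul]
  simp

theorem mk_mul_mk_eq_one_of_recurrence (N : ℕ) (E : ℕ → ℝ) (h0 : E 0 = 1)
    (hrec : ∀ n : ℕ, 2 ≤ n → Even n →
      ∑ i ∈ range (n / 2 + 1),
        E (2 * i) / ((Nat.factorial (2 * N + n - 2 * i) : ℝ) * (Nat.factorial (2 * i))) = 0) :
    mk (fun i => E (2 * i) / (2 * i).factorial) *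
      mk (fun i => ((2 * N).factorial : ℝ) / (2 * N + 2 * i).factorial) = 1 := by
  ext (_ | j)
  · simp [h0, (Nat.factorial_pos _).ne']
  have hj := hrec (2 * (j + 1)) (by omega) (even_two_mul _)
  rw [Nat.mul_div_cancel_left _ two_pos] at hj
  rw [coeff_mul, Nat.sum_antidiagonal_eq_sum_range_succ
    (fun i l => coeff i (mk fun i => E (2 * i) / (2 * i).factorial) *
      coeff l (mk fun i => ((2 * N).factorial : ℝ) / (2 * N + 2 * i).factorial)),
    coeff_one, if_neg j.succ_ne_zero]
  calc _ = ((2 * N).factorial : ℝ) * ∑ i ∈ range (j + 1 + 1),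
        E (2 * i) / ((2 * N + 2 * (j + 1) - 2 * i).factorial * (2 * i).factorial) := by
        rw [mul_sum]
        refine sum_congr rfl fun i hi => ?_
        rw [coeff_mk, coeff_mk, show 2 * N + 2 * (j + 1 - i) = 2 * N + 2 * (j + 1) - 2 * i by
          have := mem_range.mp hi; omega]
        ring
    _ = 0 := by rw [hj, mul_zero]

/-- For `N ≥ 0` and even `n ≥ 2`,
`E_{N,n} = n! ∑_{k=1}^n (-1)^k C(n+1,k+1) ∑_{i₁,…,i_k ≥ 0, i₁+⋯+i_k=n/2}
((2N)!)^k/((2N+2i₁)!⋯(2N+2i_k)!)`, the hypergeometric Euler numbers being defined by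
`E_{N,0}=1` and the recurrence `∑_{i=0}^{n/2} E_{N,2i}/((2N+n-2i)!(2i)!)=0` for even `n ≥ 2`. -/
theorem hypergeometric_euler_binomial_explicit (N : ℕ) (E : ℕ → ℝ)
    (h0 : E 0 = 1)
    (hrec : ∀ n : ℕ, 2 ≤ n → Even n →
      ∑ i ∈ Finset.range (n / 2 + 1),
        E (2 * i) / ((Nat.factorial (2 * N + n - 2 * i) : ℝ) * (Nat.factorial (2 * i))) = 0) :
    ∀ n : ℕ, 2 ≤ n → Even n →
      E n = (Nat.factorial n : ℝ) *
        ∑ k ∈ Finset.Icc 1 n, (-1 : ℝ) ^ k * (Nat.choose (n + 1) (k + 1) : ℝ) *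
          ∑ c ∈ Finset.Nat.antidiagonalTuple k (n / 2),
            ((Nat.factorial (2 * N) : ℝ)) ^ k / ∏ j, (Nat.factorial (2 * N + 2 * c j) : ℝ) := by
  rintro _ hn ⟨m, rfl⟩
  rw [← two_mul] at hn ⊢
  rw [Nat.mul_div_cancel_left _ two_pos]
  set A : ℝ⟦X⟧ := mk fun i => ((2 * N).factorial : ℝ) / (2 * N + 2 * i).factorial
  have hA : constantCoeff A = 1 := by simp [A, (Nat.factorial_pos _).ne']
  have hcoeff := coeff_eq_sum_neg_one_pow_mul_choose_mul_coeff_pow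
    (mul_comm A _ ▸ mk_mul_mk_eq_one_of_recurrence N E h0 hrec) hA (m := m) (n := 2 * m)
    (by omega) (by omega)
  rw [coeff_mk, div_eq_iff (Nat.cast_ne_zero.mpr (Nat.factorial_ne_zero _))] at hcoeff
  rw [hcoeff, mul_comm]
  congr 1
  refine sum_congr rfl fun k _ => ?_
  rw [coeff_pow_eq_sum_antidiagonalTuple]
  refine congrArg _ (sum_congr rfl fun c _ => ?_)
  simp [A, prod_div_distrib]
end

section
/- For every N ≥ 0, E_{N,4} = 2·4!·(4N+5) / ((2N+1)²(2N+2)²(2N+3)(2N+4)). -/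
open Nat Finset

lemma cast_factorial_add_two (k : ℕ) : ((k + 2)! : ℝ) = (k + 2) * (k + 1) * k ! := by
  push_cast [Nat.factorial_succ]; ring

section

variable {N : ℕ} {E : ℕ → ℝ}

lemma hypergeometricEuler_two (h0 : E 0 = 1)
    (hrec : ∑ i ∈ range 2, E (2 * i) / (((2 * N + 2 - 2 * i)! : ℝ) * (2 * i)!) = 0) :
    E 2 = -2 / ((2 * N + 1) * (2 * N + 2)) := by
  have h : E 0 / (2 * N + 2)! + E 2 / ((2 * N)! * 2) = 0 := by
    simpa [sum_range_succ, Nat.factorial] using hrec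
  rw [h0, cast_factorial_add_two] at h
  field_simp at h ⊢
  push_cast at h
  linear_combination h / 2

lemma hypergeometricEuler_four (h0 : E 0 = 1) (hE2 : E 2 = -2 / ((2 * N + 1) * (2 * N + 2)))
    (hrec : ∑ i ∈ range 3, E (2 * i) / (((2 * N + 4 - 2 * i)! : ℝ) * (2 * i)!) = 0) :
    E 4 = 48 * (4 * N + 5) / ((2 * N + 1) ^ 2 * (2 * N + 2) ^ 2 * (2 * N + 3) * (2 * N + 4)) := by
  have h : E 0 / (2 * N + 4)! + E 2 / ((2 * N + 2)! * 2) + E 4 / ((2 * N)! * 24) = 0 := by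
    simpa [sum_range_succ, Nat.factorial] using hrec
  rw [h0, hE2, show 2 * N + 4 = 2 * N + 2 + 2 by ring, cast_factorial_add_two,
    cast_factorial_add_two] at h
  field_simp at h ⊢
  push_cast at h
  linear_combination h

end

theorem hypergeometric_euler_four_general (N : ℕ) (E : ℕ → ℝ)
    (h0 : E 0 = 1)
    (hrec : ∀ n : ℕ, 2 ≤ n → Even n →
      ∑ i ∈ Finset.range (n / 2 + 1),
        E (2 * i) / ((Nat.factorial (2 * N + n - 2 * i) : ℝ) * (Nat.factorial (2 * i))) = 0) :
    E 4 = 2 * (Nat.factorial 4 : ℝ) * ((4 * N + 5 : ℕ) : ℝ) /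
      (((2 * N + 1 : ℕ) : ℝ) ^ 2 * ((2 * N + 2 : ℕ) : ℝ) ^ 2 *
        ((2 * N + 3 : ℕ) : ℝ) * ((2 * N + 4 : ℕ) : ℝ)) := by
  have hE2 := hypergeometricEuler_two h0 (hrec 2 le_rfl even_two)
  rw [hypergeometricEuler_four h0 hE2 (hrec 4 (by norm_num) (by decide))]
  push_cast [Nat.factorial]
  ring

/-- For every `N ≥ 0`, `E_{N,4} = 2·4!·(4N+5)/((2N+1)²(2N+2)²(2N+3)(2N+4))`, the hypergeometric
Euler numbers being defined by `E_{N,0}=1`, the recurrence, and `E_{N,n}=0` for odd `n`. -/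
theorem hypergeometric_euler_four (N : ℕ) (E : ℕ → ℝ)
    (h0 : E 0 = 1)
    (hodd : ∀ n : ℕ, Odd n → E n = 0)
    (hrec : ∀ n : ℕ, 2 ≤ n → Even n →
      ∑ i ∈ Finset.range (n / 2 + 1),
        E (2 * i) / ((Nat.factorial (2 * N + n - 2 * i) : ℝ) * (Nat.factorial (2 * i))) = 0) :
    E 4 = 2 * (Nat.factorial 4 : ℝ) * ((4 * N + 5 : ℕ) : ℝ) /
      (((2 * N + 1 : ℕ) : ℝ) ^ 2 * ((2 * N + 2 : ℕ) : ℝ) ^ 2 *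
        ((2 * N + 3 : ℕ) : ℝ) * ((2 * N + 4 : ℕ) : ℝ)) :=
  hypergeometric_euler_four_general N E h0 hrec
end

section
/- For all n ≥ 1, E_{1,n} = -(n-1)·B_n, where B_n are the Bernoulli numbers. -/
/-!
Let `B` be the Bernoulli series, so `B * (exp X - 1) = X`; differentiating gives
`B' * (exp X - 1) + B * exp X = 1`. The series with coefficients `(1 - n) B_n / n!` is
`B - X * B'`, and combining both identities with `2 (cosh X - 1) exp X = (exp X - 1)^2` yields
`2 (cosh X - 1) exp X (B - X * B') = X^2 exp X`. Cancelling `2 exp X` shows that `B - X * B'`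
solves the defining equation of `E_{1,n}`, and the solution is unique because `cosh X - 1 ≠ 0`
in the integral domain `ℝ⟦X⟧`.
-/

open PowerSeries
open scoped Nat

section BernoulliDerivative
variable (A : Type*) [CommRing A] [Algebra ℚ A]

theorem derivative_bernoulliPowerSeries_mul_exp_sub_one :
    d⁄dX A (bernoulliPowerSeries A) * (exp A - 1) + bernoulliPowerSeries A * exp A = 1 := by
  have h := congrArg (d⁄dX A) (bernoulliPowerSeries_mul_exp_sub_one A)
  rwa [Derivation.leibniz, map_sub, derivative_exp, derivative_one, sub_zero, derivative_X,
    smul_eq_mul, smul_eq_mul, add_comm, mul_comm] at h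

theorem exp_sub_one_sq_mul_bernoulliPowerSeries_sub_X_mul_derivative :
    (exp A - 1) ^ 2 * (bernoulliPowerSeries A - X * d⁄dX A (bernoulliPowerSeries A)) =
      X ^ 2 * exp A := by
  have hB := bernoulliPowerSeries_mul_exp_sub_one A
  have hdB := derivative_bernoulliPowerSeries_mul_exp_sub_one A
  linear_combination (exp A - 1 + X * exp A) * hB - X * (exp A - 1) * hdB

end BernoulliDerivative

section CoshSubOne
variable (K : Type*) [Field K] [CharZero K]

theorem coeff_bernoulliPowerSeries_sub_X_mul_derivative (n : ℕ) :
    coeff n (bernoulliPowerSeries K - X * d⁄dX K (bernoulliPowerSeries K)) =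
      (1 - n : K) * bernoulli n / n ! := by
  cases n with
  | zero => simp [bernoulliPowerSeries]
  | succ m =>
    rw [map_sub, coeff_succ_X_mul, coeff_derivative]
    simp only [bernoulliPowerSeries, coeff_mk, map_div₀, map_natCast, eq_ratCast]
    field_simp
    push_cast [Nat.factorial_succ]
    ring

noncomputable def coshSubOne : K⟦X⟧ :=
  mk fun m => if Even m ∧ 2 ≤ m then 1 / (m ! : K) else 0

theorem two_mul_coshSubOne : 2 * coshSubOne K = exp K + evalNegHom (exp K) - 2 := by
  ext n
  rw [show (2 : K⟦X⟧) = C (2 : K) from rfl, coeff_C_mul]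
  simp only [coshSubOne, map_sub, map_add, coeff_mk, coeff_exp, evalNegHom, coeff_rescale,
    coeff_C, map_div₀, map_one, map_natCast]
  rcases n.even_or_odd with hn | hn
  · rcases lt_or_ge n 2 with hlt | hge
    · obtain rfl : n = 0 := by rcases hn with ⟨k, rfl⟩; omega
      norm_num
    · rw [if_pos ⟨hn, hge⟩, hn.neg_one_pow, if_neg (by omega)]
      ring
  · rw [if_neg (by simp [Nat.not_even_iff_odd.mpr hn]), hn.neg_one_pow, if_neg (by grind)]
    ring

theorem two_mul_coshSubOne_mul_exp : 2 * coshSubOne K * exp K = (exp K - 1) ^ 2 := by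
  linear_combination exp K * two_mul_coshSubOne K + exp_mul_exp_neg_eq_one (A := K)

theorem two_mul_monomial_two : 2 * monomial 2 (1 / (2 ! : K)) = X ^ 2 := by
  ext k
  rw [show (2 : K⟦X⟧) = C (2 : K) from rfl, X_pow_eq, coeff_C_mul, coeff_monomial, coeff_monomial]
  split_ifs <;> norm_num

theorem coshSubOne_mul_bernoulliPowerSeries_sub_X_mul_derivative :
    coshSubOne K * (bernoulliPowerSeries K - X * d⁄dX K (bernoulliPowerSeries K)) =
      monomial 2 (1 / (2 ! : K)) := by
  have h2exp : IsUnit (2 * exp K : K⟦X⟧) := isUnit_iff_constantCoeff.mpr (by simp [map_ofNat])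
  apply h2exp.mul_left_cancel
  linear_combination
    (bernoulliPowerSeries K - X * d⁄dX K (bernoulliPowerSeries K)) * two_mul_coshSubOne_mul_exp K +
    exp_sub_one_sq_mul_bernoulliPowerSeries_sub_X_mul_derivative K - exp K * two_mul_monomial_two K

theorem coshSubOne_ne_zero : coshSubOne K ≠ 0 := fun h ↦ by
  simpa [coshSubOne] using congrArg (coeff 2) h

end CoshSubOne

/-- For `n ≥ 1`, `E_{1,n} = -(n-1)·B_n`, where `E_{1,n}` is defined by
`(cosh t - 1) · ∑ E_{1,n} t^n/n! = t²/2!` and `B_n` are the Bernoulli numbers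
(with `B₁ = -1/2`). -/
theorem hypergeometric_euler_one_eq_bernoulli (E : ℕ → ℝ)
    (hE : (PowerSeries.mk fun m => if Even m ∧ 2 ≤ m then (1 : ℝ) / (Nat.factorial m) else 0) *
        (PowerSeries.mk fun n => E n / (Nat.factorial n)) =
      PowerSeries.monomial 2 ((1 : ℝ) / (Nat.factorial 2))) :
    ∀ n : ℕ, 1 ≤ n → E n = -((n : ℝ) - 1) * ((bernoulli n : ℚ) : ℝ) := by
  intro n _
  have hseries : (mk fun n => E n / n ! : ℝ⟦X⟧) =
      bernoulliPowerSeries ℝ - X * d⁄dX ℝ (bernoulliPowerSeries ℝ) :=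
    mul_left_cancel₀ (coshSubOne_ne_zero ℝ)
      (hE.trans (coshSubOne_mul_bernoulliPowerSeries_sub_X_mul_derivative ℝ).symm)
  have hcoeff := congrArg (coeff n) hseries
  rw [coeff_mk, coeff_bernoulliPowerSeries_sub_X_mul_derivative,
    div_left_inj' (by positivity)] at hcoeff
  rw [hcoeff]
  ring
end

section
/- For n ≥ 1, Σ_{i=0}^{n} (i-1)·B_i / ((n-i+2)! · i!) equals 0 if n is even, and equals -B_{n+1}/n! if n is odd. -/
/-!
Multiplying the `i`-th term by `(n + 2)!` turns it into `(i - 1) * C(n + 2, i) * B_i`, so the sum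
becomes a binomial sum of Bernoulli numbers. Writing `i * C(m + 1, i) = (m + 1) * (C(m + 1, i) - C(m, i))`
reduces the sum over `i ≤ n + 1` to two instances of the recurrence `∑_{i < m} C(m, i) B_i = 0`
(`m ≥ 2`); removing the term `i = n + 1` leaves `-(n + 1)(n + 2) B_{n+1}`.
For even `n ≥ 2` this vanishes, as `B_{n+1}` is an odd-index Bernoulli number.
-/

open Finset Nat

lemma cast_mul_choose_succ (m k : ℕ) (hk : k ≤ m + 1) :
    (k : ℚ) * (m + 1).choose k = (m + 1) * ((m + 1).choose k - m.choose k) := by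
  have h : (m.choose k * (m + 1) : ℚ) = (m + 1).choose k * ((m + 1 - k : ℕ) : ℚ) := by
    exact_mod_cast choose_mul_succ_eq m k
  rw [Nat.cast_sub hk] at h
  push_cast at h
  linarith

lemma sum_range_mul_choose_mul_bernoulli (m : ℕ) (hm : 2 ≤ m) :
    ∑ k ∈ range (m + 1), (k : ℚ) * (m + 1).choose k * bernoulli k = -(m + 1) * bernoulli m := by
  have hchoose : ∀ k ∈ range (m + 1), (k : ℚ) * (m + 1).choose k * bernoulli k =
      (m + 1) * ((m + 1).choose k * bernoulli k) - (m + 1) * (m.choose k * bernoulli k) := by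
    intro k hk
    rw [cast_mul_choose_succ m k (by simp at hk; omega)]
    ring
  have h1 : ∑ k ∈ range (m + 1), ((m + 1).choose k : ℚ) * bernoulli k = 0 := by
    simp [show m ≠ 0 by omega]
  have h2 : ∑ k ∈ range (m + 1), (m.choose k : ℚ) * bernoulli k = bernoulli m := by
    rw [sum_range_succ, sum_bernoulli, if_neg (by omega), choose_self, cast_one, zero_add, one_mul]
  rw [sum_congr rfl hchoose, sum_sub_distrib, ← mul_sum, ← mul_sum, h1, h2]
  ring

lemma sum_range_sub_one_mul_choose_mul_bernoulli (m : ℕ) (hm : 2 ≤ m) :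
    ∑ k ∈ range (m + 1), ((k : ℚ) - 1) * (m + 1).choose k * bernoulli k =
      -(m + 1) * bernoulli m := by
  have h := sum_bernoulli (m + 1)
  simp only [show m + 1 ≠ 1 by omega, if_false] at h
  simp only [sub_mul, one_mul, sum_sub_distrib, h, sum_range_mul_choose_mul_bernoulli m hm,
    sub_zero]

lemma div_factorial_mul_factorial {m k : ℕ} (hk : k ≤ m) (x : ℚ) :
    x / ((m - k)! * k ! : ℚ) = x * m.choose k / m ! := by
  rw [cast_choose ℚ hk]
  field_simp

/-- For `n ≥ 1`, `∑_{i=0}^n (i-1)·B_i/((n-i+2)!·i!)` equals `0` if `n` is even and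
`-B_{n+1}/n!` if `n` is odd, where `B_n` are the Bernoulli numbers with `B₁ = -1/2`. -/
theorem bernoulli_weighted_sum (n : ℕ) (hn : 1 ≤ n) :
    ∑ i ∈ Finset.range (n + 1),
      ((i : ℚ) - 1) * bernoulli i /
        ((Nat.factorial (n - i + 2) : ℚ) * (Nat.factorial i : ℚ)) =
      if Even n then 0 else -bernoulli (n + 1) / (Nat.factorial n : ℚ) := by
  have hterm : ∀ i ∈ range (n + 1), ((i : ℚ) - 1) * bernoulli i / ((n - i + 2)! * i ! : ℚ) =
      ((i : ℚ) - 1) * (n + 2).choose i * bernoulli i / (n + 2)! := by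
    intro i hi
    rw [show n - i + 2 = n + 2 - i by simp at hi; omega,
      div_factorial_mul_factorial (by simp at hi; omega)]
    ring
  have hsum := sum_range_sub_one_mul_choose_mul_bernoulli (n + 1) (by omega)
  rw [sum_range_succ, choose_succ_self_right] at hsum
  push_cast at hsum
  have hfac : ((n + 2)! : ℚ) = (n + 2) * (n + 1) * n ! := by
    push_cast [factorial_succ]; ring
  rw [sum_congr rfl hterm, ← sum_div, eq_sub_of_add_eq hsum, hfac]
  split_ifs with heven
  · rw [bernoulli_eq_zero_of_odd heven.add_one (by omega)]
    simp
  · field_simp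
    ring
end

section
/- For N ≥ 0 and n ≥ 1, the hypergeometric Euler number satisfies the determinant expression E_{N,2n} = (-1)^n (2n)! · det M, where M is the n×n lower Hessenberg matrix with entries M_{i,j} = (2N)!/((2N+2(i-j+1))!) for i ≥ j, M_{i,i+1} = 1, and M_{i,j} = 0 for j > i+1. -/
/-!
With `e k = E (2k) / (2k)!` and `a k = (2N)! / (2N + 2k)!`, the recurrence says that
`(∑ a k xᵏ) (∑ e k xᵏ) = 1`, where `a 0 = e 0 = 1`. So the Hessenberg matrix `M` with rows
`(a (i+1), …, a 1, 1, 0, …)` sends `(e 0, …, e (n-1))` to `(0, …, 0, -e n)`. Cramer's rule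
then gives `det M * e 0 = adj(M) 0 (n-1) * (-e n)`, and that cofactor is `(-1)^(n-1)` because
the minor is unitriangular.
-/

open Finset Matrix

namespace Matrix

variable {R : Type*} [CommRing R]

def hessenbergToeplitz (a : ℕ → R) (n : ℕ) : Matrix (Fin n) (Fin n) R :=
  Matrix.of fun i j => if (j : ℕ) = i + 1 then 1 else if (j : ℕ) ≤ i then a (i - j + 1) else 0

lemma hessenbergToeplitz_mulVec_apply (a e : ℕ → R) (n : ℕ) (i : Fin n) :
    (hessenbergToeplitz a n *ᵥ fun j => e j) i =
      ∑ j ∈ range (i + 1), a (i + 1 - j) * e j + if (i : ℕ) + 1 < n then e (i + 1) else 0 := by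
  simp only [mulVec, dotProduct, hessenbergToeplitz, of_apply, ite_mul, one_mul, zero_mul]
  rw [Fin.sum_univ_eq_sum_range (fun j => if j = (i : ℕ) + 1 then e j
    else if j ≤ (i : ℕ) then a (i - j + 1) * e j else 0), Finset.sum_ite, sum_filter, sum_ite_eq']
  simp only [mem_range]
  rw [add_comm, sum_filter]
  congr 1
  refine (sum_subset_zero_on_sdiff (range_subset_range.2 i.2) (fun x hx => ?_)
    fun x hx => ?_).symm
  · simp only [mem_sdiff, mem_range] at hx
    simp [show ¬x ≤ i by omega]
  · simp only [mem_range] at hx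
    rw [if_pos (by omega), if_pos (by omega), Nat.sub_add_comm (by omega)]

lemma hessenbergToeplitz_mulVec_eq_single (a e : ℕ → R)
    (hrec : ∀ k, ∑ j ∈ range (k + 1), a (k + 1 - j) * e j = -e (k + 1)) (m : ℕ) :
    hessenbergToeplitz a (m + 1) *ᵥ (fun j => e j) = Pi.single (Fin.last m) (-e (m + 1)) := by
  ext i
  rw [hessenbergToeplitz_mulVec_apply, hrec]
  rcases (Fin.le_last i).lt_or_eq with hi | rfl
  · rw [Pi.single_eq_of_ne hi.ne, if_pos (by simpa [Fin.lt_def] using hi), neg_add_cancel]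
  · simp

lemma adjugate_hessenbergToeplitz_zero_last (a : ℕ → R) (m : ℕ) :
    adjugate (hessenbergToeplitz a (m + 1)) 0 (Fin.last m) = (-1) ^ m := by
  rw [adjugate_fin_succ_eq_det_submatrix, det_of_isLowerTriangular]
  · simp [hessenbergToeplitz]
  · intro r c hrc
    have hrc : r < c := hrc
    simp [hessenbergToeplitz, Fin.val_ne_of_ne hrc.ne', hrc.not_gt]

theorem det_hessenbergToeplitz (a e : ℕ → R) (he0 : e 0 = 1)
    (hrec : ∀ k, ∑ j ∈ range (k + 1), a (k + 1 - j) * e j = -e (k + 1)) (n : ℕ) :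
    (hessenbergToeplitz a n).det = (-1) ^ n * e n := by
  rcases n with _ | m
  · simp [he0]
  have hcramer := congrFun (congrArg (adjugate (hessenbergToeplitz a (m + 1)) *ᵥ ·)
    (hessenbergToeplitz_mulVec_eq_single a e hrec m)) 0
  rw [mulVec_mulVec, adjugate_mul, smul_mulVec, one_mulVec, mulVec_single] at hcramer
  simp only [Pi.smul_apply, col_apply, op_smul_eq_mul, Fin.val_zero, he0, smul_eq_mul, mul_one,
    adjugate_hessenbergToeplitz_zero_last] at hcramer
  rw [hcramer, pow_succ]
  ring

end Matrix

lemma hypergeometricEuler_convolution_eq_neg (N : ℕ) (E : ℕ → ℝ)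
    (hrec : ∀ n : ℕ, 2 ≤ n → Even n →
      ∑ i ∈ Finset.range (n / 2 + 1),
        E (2 * i) / ((Nat.factorial (2 * N + n - 2 * i) : ℝ) * (Nat.factorial (2 * i))) = 0)
    (k : ℕ) :
    ∑ j ∈ range (k + 1), ((2 * N).factorial / (2 * N + 2 * (k + 1 - j)).factorial : ℝ) *
        (E (2 * j) / (2 * j).factorial) = -(E (2 * (k + 1)) / (2 * (k + 1)).factorial) := by
  have H := hrec (2 * (k + 1)) (by omega) (even_two_mul _)
  rw [show 2 * (k + 1) / 2 = k + 1 by omega, sum_range_succ, Nat.add_sub_cancel] at H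
  have hterm : ∀ j ∈ range (k + 1),
      ((2 * N).factorial / (2 * N + 2 * (k + 1 - j)).factorial : ℝ) *
          (E (2 * j) / (2 * j).factorial) =
        (2 * N).factorial *
          (E (2 * j) / ((2 * N + 2 * (k + 1) - 2 * j).factorial * (2 * j).factorial)) := by
    intro j hj
    rw [show 2 * N + 2 * (k + 1) - 2 * j = 2 * N + 2 * (k + 1 - j) by grind]
    ring
  have hN : ((2 * N).factorial : ℝ) ≠ 0 := by positivity
  rw [sum_congr rfl hterm, ← mul_sum, eq_neg_iff_add_eq_zero, eq_neg_of_add_eq_zero_left H]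
  field_simp
  ring

/-- Determinant expression for the hypergeometric Euler numbers: for `N ≥ 0` and `n ≥ 1`,
`E_{N,2n} = (-1)^n (2n)! det M` where `M` is the `n×n` lower Hessenberg matrix with
`M_{i,j} = (2N)!/(2N+2(i-j+1))!` for `i ≥ j`, `M_{i,i+1} = 1` and `M_{i,j} = 0` for `j > i+1`. -/
theorem hypergeometric_euler_det (N : ℕ) (E : ℕ → ℝ)
    (h0 : E 0 = 1)
    (hrec : ∀ n : ℕ, 2 ≤ n → Even n →
      ∑ i ∈ Finset.range (n / 2 + 1),
        E (2 * i) / ((Nat.factorial (2 * N + n - 2 * i) : ℝ) * (Nat.factorial (2 * i))) = 0) :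
    ∀ n : ℕ, 1 ≤ n →
      E (2 * n) = (-1 : ℝ) ^ n * (Nat.factorial (2 * n) : ℝ) *
        Matrix.det (Matrix.of fun i j : Fin n =>
          if (j : ℕ) = (i : ℕ) + 1 then (1 : ℝ)
          else if (j : ℕ) ≤ (i : ℕ) then
            (Nat.factorial (2 * N) : ℝ) / (Nat.factorial (2 * N + 2 * ((i : ℕ) - (j : ℕ) + 1)) : ℝ)
          else 0) := by
  intro n _
  let a : ℕ → ℝ := fun k => (2 * N).factorial / (2 * N + 2 * k).factorial
  have hdet := det_hessenbergToeplitz a (fun k => E (2 * k) / (2 * k).factorial) (by simp [h0])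
    (hypergeometricEuler_convolution_eq_neg N E hrec) n
  change _ = _ * _ * (hessenbergToeplitz a n).det
  rw [hdet, ← mul_assoc, mul_right_comm _ _ ((-1 : ℝ) ^ n), ← mul_pow, neg_one_mul, neg_neg,
    one_pow, one_mul, mul_div_cancel₀ _ (by positivity)]
end

section
/- For n ≥ 1, the classical Euler number satisfies E_{2n} = (-1)^n (2n)! · det M, where M is the n×n matrix with M_{i,j} = 1/(2(i-j+1))! for i ≥ j, M_{i,i+1} = 1, and M_{i,j} = 0 for j > i+1. -/
/-!
Comparing coefficients of `t^(2m)` in `cosh t · ∑ E_n t^n/n! = 1` shows that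
`C(s) = ∑ s^k/(2k)!` and `Y(s) = ∑ E_{2k} s^k/(2k)!` are inverse power series. For inverse series
with constant term `1`, the first `n + 1` coefficients of `Y` solve a unitriangular Toeplitz system
with right-hand side `e₀`, so the `n`-th one is the `(n, 0)` entry of the adjugate of that Toeplitz
matrix: `(-1)^n` times the minor obtained by deleting the first row and the last column, which is
the Hessenberg matrix of the statement.
-/

open Finset Matrix

theorem Finset.sum_range_two_mul_add_one_of_odd_eq_zero {M : Type*} [AddCommMonoid M]
    (f : ℕ → M) (hf : ∀ i, Odd i → f i = 0) (m : ℕ) :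
    ∑ i ∈ range (2 * m + 1), f i = ∑ k ∈ range (m + 1), f (2 * k) := by
  induction m with
  | zero => simp
  | succ m ih =>
    rw [show 2 * (m + 1) + 1 = 2 * m + 1 + 1 + 1 by ring, sum_range_succ, sum_range_succ, ih,
      hf _ (odd_two_mul_add_one m), add_zero, sum_range_succ _ (m + 1), mul_add_one]

namespace PowerSeries

variable {R : Type*}

section CommSemiring

variable [CommSemiring R]

theorem mk_two_mul_mul_mk_two_mul_eq_one {a b : ℕ → R}
    (h : mk (fun m => if Even m then a m else 0) * mk b = 1) :
    mk (fun k => a (2 * k)) * mk (fun k => b (2 * k)) = 1 := by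
  ext m
  have h2m := congrArg (coeff (2 * m)) h
  rw [coeff_mul, Finset.Nat.sum_antidiagonal_eq_sum_range_succ
      (fun i j => coeff i (mk _) * coeff j (mk b)),
    sum_range_two_mul_add_one_of_odd_eq_zero _
      (fun i hi => by simp [Nat.not_even_iff_odd.2 hi])] at h2m
  rw [coeff_mul, Finset.Nat.sum_antidiagonal_eq_sum_range_succ
      (fun i j => coeff i (mk _) * coeff j (mk _))]
  simpa [coeff_one, ← Nat.mul_sub] using h2m

noncomputable def lowerToeplitz (A : R⟦X⟧) (n : ℕ) : Matrix (Fin n) (Fin n) R :=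
  of fun i j => if (j : ℕ) ≤ i then coeff (i - j : ℕ) A else 0

noncomputable def hessenberg (A : R⟦X⟧) (n : ℕ) : Matrix (Fin n) (Fin n) R :=
  of fun i j => if (j : ℕ) = i + 1 then 1 else if (j : ℕ) ≤ i then coeff (i - j + 1 : ℕ) A else 0

theorem lowerToeplitz_mulVec (A B : R⟦X⟧) (n : ℕ) :
    lowerToeplitz A n *ᵥ (fun j => coeff (j : ℕ) B) = fun i : Fin n => coeff (i : ℕ) (A * B) := by
  ext i
  rw [mul_comm, coeff_mul, Finset.Nat.sum_antidiagonal_eq_sum_range_succ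
    (fun p q => coeff p B * coeff q A)]
  calc ∑ j, lowerToeplitz A n i j * coeff (j : ℕ) B
      = ∑ k ∈ range n, if k ≤ i then coeff k B * coeff (i - k : ℕ) A else 0 := by
        rw [← Fin.sum_univ_eq_sum_range (fun k => if k ≤ i then _ else _)]
        simp only [lowerToeplitz, of_apply, ite_mul, zero_mul, mul_comm (coeff _ A)]
    _ = ∑ k ∈ range (i + 1), coeff k B * coeff (i - k : ℕ) A := by
        rw [← sum_filter]
        congr 1
        ext k
        simp only [mem_filter, mem_range]
        omega

theorem lowerToeplitz_submatrix_succ_castSucc {A : R⟦X⟧} (hA : constantCoeff A = 1) (n : ℕ) :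
    (lowerToeplitz A (n + 1)).submatrix Fin.succ Fin.castSucc = hessenberg A n := by
  ext i j
  simp only [lowerToeplitz, hessenberg, submatrix_apply, of_apply, Fin.val_succ,
    Fin.val_castSucc]
  rcases lt_trichotomy (j : ℕ) (i + 1) with h | h | h
  · rw [if_pos h.le, if_neg h.ne, if_pos (by omega), Nat.sub_add_comm (by omega)]
  · simp [h, hA]
  · rw [if_neg (by omega), if_neg (by omega), if_neg (by omega)]

end CommSemiring

section CommRing

variable [CommRing R]

theorem det_lowerToeplitz {A : R⟦X⟧} (hA : constantCoeff A = 1) (n : ℕ) :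
    (lowerToeplitz A n).det = 1 := by
  rw [det_of_isLowerTriangular]
  · simp [lowerToeplitz, hA]
  · intro i j hij
    simp only [lowerToeplitz, of_apply, ite_eq_right_iff]
    exact fun h => absurd h (not_le.2 hij)

theorem coeff_eq_neg_one_pow_mul_det_hessenberg {A B : R⟦X⟧} (hA : constantCoeff A = 1)
    (hAB : A * B = 1) (n : ℕ) : coeff n B = (-1) ^ n * (hessenberg A n).det := by
  set T := lowerToeplitz A (n + 1)
  have hTB : T *ᵥ (fun j : Fin (n + 1) => coeff (j : ℕ) B) = Pi.single 0 1 := by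
    rw [lowerToeplitz_mulVec, hAB]
    ext i
    simp only [coeff_one, Pi.single_apply, Fin.ext_iff, Fin.val_zero]
  have hB : (fun j : Fin (n + 1) => coeff (j : ℕ) B) = T.adjugate.col 0 := by
    rw [← mulVec_single_one, ← hTB, mulVec_mulVec, adjugate_mul,
      det_lowerToeplitz hA, one_smul, one_mulVec]
  have hBn := congrFun hB (Fin.last n)
  simp only [Fin.val_last] at hBn
  rw [hBn, col_apply, adjugate_fin_succ_eq_det_submatrix, Fin.succAbove_zero,
    Fin.succAbove_last, lowerToeplitz_submatrix_succ_castSucc hA]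
  simp

end CommRing

end PowerSeries

/-- Glaisher's determinant expression for the classical Euler numbers (defined by
`1/cosh t = ∑ E_n t^n/n!`): for `n ≥ 1`,
`E_{2n} = (-1)^n (2n)! det M` with `M_{i,j} = 1/(2(i-j+1))!` for `i ≥ j`,
`M_{i,i+1} = 1` and `M_{i,j} = 0` for `j > i+1`. -/
theorem euler_number_det (E : ℕ → ℝ)
    (hE : (PowerSeries.mk fun m => if Even m then (1 : ℝ) / (Nat.factorial m) else 0) *
        (PowerSeries.mk fun n => E n / (Nat.factorial n)) = 1) :
    ∀ n : ℕ, 1 ≤ n →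
      E (2 * n) = (-1 : ℝ) ^ n * (Nat.factorial (2 * n) : ℝ) *
        Matrix.det (Matrix.of fun i j : Fin n =>
          if (j : ℕ) = (i : ℕ) + 1 then (1 : ℝ)
          else if (j : ℕ) ≤ (i : ℕ) then
            (1 : ℝ) / (Nat.factorial (2 * ((i : ℕ) - (j : ℕ) + 1)) : ℝ)
          else 0) := by
  intro n _
  have hcosh :
      PowerSeries.constantCoeff (PowerSeries.mk fun k => (1 : ℝ) / (2 * k).factorial) = 1 := by
    simp
  have hdet := PowerSeries.coeff_eq_neg_one_pow_mul_det_hessenberg hcosh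
    (PowerSeries.mk_two_mul_mul_mk_two_mul_eq_one hE) n
  rw [PowerSeries.coeff_mk, div_eq_iff (by positivity)] at hdet
  rw [hdet, PowerSeries.hessenberg]
  simp only [PowerSeries.coeff_mk]
  ring
end

section
/- For n ≥ 0, Σ_{i=0}^n C(2n, 2i) E_{2i} E_{2n-2i} = 2^{2n+2}(2^{2n+2}-1) B_{2n+2}/(2n+2), where E_k are Euler numbers and B_k are Bernoulli numbers. -/
/-!
The exponential generating function of the `E n` is `F = 1 / cosh X`. Then `tanh = sinh · F` has
derivative `cosh² F² - sinh² F² = F²`, while `X tanh X = B(4X) - B(2X) + X` for the Bernoulli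
generating function `B(t) = t / (eᵗ - 1)`. Comparing the coefficients of `X ^ (2n)` in `F²` gives
the identity; the odd `E n` vanish because `F` is even.
-/

open Finset

theorem Finset.sum_range_two_mul_add_one_of_odd {M : Type*} [AddCommMonoid M] (g : ℕ → M)
    (hg : ∀ m, Odd m → g m = 0) (n : ℕ) :
    ∑ k ∈ range (2 * n + 1), g k = ∑ i ∈ range (n + 1), g (2 * i) := by
  induction n with
  | zero => simp
  | succ n ih =>
    rw [show 2 * (n + 1) + 1 = 2 * n + 1 + 1 + 1 by ring, sum_range_succ, sum_range_succ, ih,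
      hg _ (odd_two_mul_add_one n), add_zero, sum_range_succ _ (n + 1), mul_add_one]

namespace PowerSeries

variable (K : Type*) [Field K]

noncomputable def cosh : K⟦X⟧ := mk fun m => if Even m then (1 : K) / m.factorial else 0

noncomputable def sinh : K⟦X⟧ := mk fun m => if Even m then 0 else (1 : K) / m.factorial

theorem evalNegHom_cosh : evalNegHom (cosh K) = cosh K := by
  ext n
  simp only [evalNegHom, cosh, coeff_rescale, coeff_mk]
  rcases Nat.even_or_odd n with h | h
  · simp [h, h.neg_one_pow]
  · simp [Nat.not_even_iff_odd.mpr h]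

variable {K} in
theorem evalNegHom_eq_self_of_cosh_mul_eq_one {F : K⟦X⟧} (hF : cosh K * F = 1) :
    evalNegHom F = F := by
  have h : cosh K * evalNegHom F = 1 := by
    rw [← evalNegHom_cosh, ← map_mul, hF, map_one]
  calc evalNegHom F = F * (cosh K * evalNegHom F) := by rw [← mul_assoc, mul_comm F, hF, one_mul]
    _ = F := by rw [h, mul_one]

variable [CharZero K]

theorem cosh_add_sinh : cosh K + sinh K = exp K := by
  ext n
  simp only [map_add, cosh, sinh, coeff_mk, coeff_exp, eq_ratCast]
  split_ifs <;> simp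

theorem cosh_sub_sinh : cosh K - sinh K = evalNegHom (exp K) := by
  ext n
  simp only [map_sub, cosh, sinh, evalNegHom, coeff_mk, coeff_rescale, coeff_exp, eq_ratCast]
  rcases Nat.even_or_odd n with h | h
  · simp [h, h.neg_one_pow]
  · simp [Nat.not_even_iff_odd.mpr h, h.neg_one_pow]

theorem cosh_sq_sub_sinh_sq : cosh K ^ 2 - sinh K ^ 2 = 1 := by
  rw [sq_sub_sq, cosh_add_sinh, cosh_sub_sinh, exp_mul_exp_neg_eq_one]

variable {K}

theorem one_div_factorial_succ_mul (n : ℕ) :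
    (1 : K) / (n + 1).factorial * (n + 1) = 1 / n.factorial := by
  rw [Nat.factorial_succ, Nat.cast_mul]; field_simp; push_cast; ring

theorem derivative_cosh : d⁄dX K (cosh K) = sinh K := by
  ext n
  simp only [coeff_derivative, cosh, sinh, coeff_mk, Nat.even_add_one, ite_not]
  split_ifs
  · simp
  · exact one_div_factorial_succ_mul n

theorem derivative_sinh : d⁄dX K (sinh K) = cosh K := by
  ext n
  simp only [coeff_derivative, cosh, sinh, coeff_mk, Nat.even_add_one, ite_not]
  split_ifs
  · exact one_div_factorial_succ_mul n
  · simp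

theorem coeff_eq_zero_of_evalNegHom_eq_self {f : K⟦X⟧} (hf : evalNegHom f = f) {n : ℕ}
    (hn : Odd n) : coeff n f = 0 := by
  have h := congrArg (coeff n) hf
  rw [evalNegHom, coeff_rescale, hn.neg_one_pow, neg_one_mul, neg_eq_iff_add_eq_zero] at h
  simpa using h

theorem derivative_sinh_mul_eq_sq_of_cosh_mul_eq_one {F : K⟦X⟧} (hF : cosh K * F = 1) :
    d⁄dX K (sinh K * F) = F ^ 2 := by
  have hdF : cosh K * d⁄dX K F = -(sinh K * F) := by
    have h := congrArg (d⁄dX K) hF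
    rw [Derivation.leibniz, smul_eq_mul, smul_eq_mul, derivative_cosh,
      Derivation.map_one_eq_zero] at h
    linear_combination h
  rw [Derivation.leibniz, smul_eq_mul, smul_eq_mul, derivative_sinh]
  linear_combination (sinh K * F) * hdF - (sinh K * d⁄dX K F + F * cosh K) * hF +
    F ^ 2 * cosh_sq_sub_sinh_sq K

theorem exp_pow_sub_one_ne_zero {k : ℕ} (hk : k ≠ 0) : exp K ^ k - 1 ≠ 0 := by
  intro h
  have h1 := congrArg (coeff 1) h
  simp [exp_pow_eq_rescale_exp, coeff_rescale, hk] at h1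

theorem rescale_bernoulliPowerSeries_mul_exp_pow_sub_one (k : ℕ) :
    rescale (k : K) (bernoulliPowerSeries K) * (exp K ^ k - 1) = (k : K⟦X⟧) * X := by
  have h := congrArg (rescale (k : K)) (bernoulliPowerSeries_mul_exp_sub_one K)
  rwa [map_mul, map_sub, map_one, ← exp_pow_eq_rescale_exp, rescale_X, map_natCast] at h

theorem coeff_rescale_bernoulliPowerSeries (a : K) (n : ℕ) :
    coeff n (rescale a (bernoulliPowerSeries K)) = a ^ n * bernoulli n / n.factorial := by
  simp [bernoulliPowerSeries, coeff_rescale, mul_div_assoc]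

-- `tanh X = 1 - 2 / (e^{2X} + 1) = 1 - 2 / (e^{2X} - 1) + 4 / (e^{4X} - 1)`
theorem X_mul_sinh_mul_eq_of_cosh_mul_eq_one {F : K⟦X⟧} (hF : cosh K * F = 1) :
    X * (sinh K * F) =
      rescale 4 (bernoulliPowerSeries K) - rescale 2 (bernoulliPowerSeries K) + X := by
  have hC : 2 * (cosh K * exp K) = exp K ^ 2 + 1 := by
    linear_combination exp K * (cosh_add_sinh K + cosh_sub_sinh K) +
      exp_mul_exp_neg_eq_one (A := K)
  have hS : 2 * (sinh K * exp K) = exp K ^ 2 - 1 := by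
    linear_combination exp K * (cosh_add_sinh K - cosh_sub_sinh K) -
      exp_mul_exp_neg_eq_one (A := K)
  have hB2 := rescale_bernoulliPowerSeries_mul_exp_pow_sub_one (K := K) 2
  have hB4 := rescale_bernoulliPowerSeries_mul_exp_pow_sub_one (K := K) 4
  push_cast at hB2 hB4
  refine mul_right_cancel₀ (exp_pow_sub_one_ne_zero (K := K) (by norm_num : 4 ≠ 0)) ?_
  linear_combination (exp K ^ 2 + 1) * hB2 - hB4 - X * sinh K * F * (exp K ^ 2 - 1) * hC
    + 2 * X * sinh K * exp K * (exp K ^ 2 - 1) * hF + X * (exp K ^ 2 - 1) * hS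

theorem factorial_mul_coeff_sq_of_cosh_mul_eq_one {F : K⟦X⟧} (hF : cosh K * F = 1) (n : ℕ) :
    n.factorial * coeff n (F ^ 2) =
      2 ^ (n + 2) * (2 ^ (n + 2) - 1) * (bernoulli (n + 2) : K) / ((n + 2 : ℕ) : K) := by
  have hT := congrArg (coeff (n + 2)) (X_mul_sinh_mul_eq_of_cosh_mul_eq_one hF)
  rw [coeff_succ_X_mul, map_add, map_sub, coeff_rescale_bernoulliPowerSeries,
    coeff_rescale_bernoulliPowerSeries, coeff_X, if_neg (by omega), add_zero] at hT
  have h4 : (4 : K) ^ (n + 2) = 2 ^ (n + 2) * 2 ^ (n + 2) := by rw [← mul_pow]; norm_num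
  have hn : (n.factorial : K) ≠ 0 := Nat.cast_ne_zero.mpr n.factorial_ne_zero
  rw [← derivative_sinh_mul_eq_sq_of_cosh_mul_eq_one hF, coeff_derivative, hT, h4,
    Nat.factorial_succ, Nat.factorial_succ]
  push_cast
  field_simp
  ring

theorem factorial_mul_coeff_mul_mk_div_factorial (a b : ℕ → K) (n : ℕ) :
    n.factorial * coeff n (mk (fun k => a k / k.factorial) * mk fun k => b k / k.factorial) =
      ∑ k ∈ range (n + 1), (n.choose k : K) * a k * b (n - k) := by
  rw [coeff_mul, Nat.sum_antidiagonal_eq_sum_range_succ_mk, mul_sum]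
  refine sum_congr rfl fun k hk => ?_
  have hkn := Nat.choose_mul_factorial_mul_factorial (Nat.le_of_lt_succ (mem_range.mp hk))
  have hk0 : (k.factorial : K) ≠ 0 := Nat.cast_ne_zero.mpr k.factorial_ne_zero
  have hnk0 : ((n - k).factorial : K) ≠ 0 := Nat.cast_ne_zero.mpr (n - k).factorial_ne_zero
  simp only [coeff_mk]
  rw [← hkn]
  push_cast
  field_simp

end PowerSeries

open PowerSeries in
/-- For `n ≥ 0`, `∑_{i=0}^n C(2n,2i) E_{2i} E_{2n-2i} = 2^{2n+2}(2^{2n+2}-1) B_{2n+2}/(2n+2)`,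
where the Euler numbers are defined by `1/cosh t = ∑ E_n t^n/n!` and `B_k` are the Bernoulli
numbers. -/
theorem euler_sum_products_eq_tangent (E : ℕ → ℝ)
    (hE : (PowerSeries.mk fun m => if Even m then (1 : ℝ) / (Nat.factorial m) else 0) *
        (PowerSeries.mk fun n => E n / (Nat.factorial n)) = 1) :
    ∀ n : ℕ,
      ∑ i ∈ Finset.range (n + 1),
          (Nat.choose (2 * n) (2 * i) : ℝ) * E (2 * i) * E (2 * n - 2 * i) =
        2 ^ (2 * n + 2) * (2 ^ (2 * n + 2) - 1) * ((bernoulli (2 * n + 2) : ℚ) : ℝ) /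
          ((2 * n + 2 : ℕ) : ℝ) := by
  intro n
  set F : ℝ⟦X⟧ := mk fun n => E n / n.factorial
  have hF : cosh ℝ * F = 1 := hE
  have hE_odd : ∀ m, Odd m → E m = 0 := fun m hm => by
    simpa [F, Nat.factorial_ne_zero] using
      coeff_eq_zero_of_evalNegHom_eq_self (evalNegHom_eq_self_of_cosh_mul_eq_one hF) hm
  calc ∑ i ∈ Finset.range (n + 1),
        ((2 * n).choose (2 * i) : ℝ) * E (2 * i) * E (2 * n - 2 * i)
      = ∑ k ∈ Finset.range (2 * n + 1), ((2 * n).choose k : ℝ) * E k * E (2 * n - k) :=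
        (Finset.sum_range_two_mul_add_one_of_odd
          (fun k => ((2 * n).choose k : ℝ) * E k * E (2 * n - k))
          (fun m hm => by simp [hE_odd m hm]) n).symm
    _ = (2 * n).factorial * coeff (2 * n) (F ^ 2) := by
        rw [sq, factorial_mul_coeff_mul_mk_div_factorial]
    _ = _ := factorial_mul_coeff_sq_of_cosh_mul_eq_one hF (2 * n)
end

section
/- For N ≥ 1 and n ≥ 0, Σ_{i₁+i₂+i₃=n} n!/(i₁! i₂! i₃!) E_{N,i₁} E_{N,i₂} E_{N,i₃} = Σ_{m=0}^n Σ_{k=0}^m C(n,m) C(m,k) ((4N-m)(2N-k)/(8N²)) E_{N,k} Ê_{N-1,n-m} Ê_{N-1,m-k}. -/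
/-!
Write `F` for the tail of `cosh` starting at `X^(2N)`, `G = F'` for the corresponding tail of
`sinh`, `θ = X d/dX`, and `E = c X^(2N) / F`, `Ĥ = 2N c X^(2N-1) / G` (`c = 1/(2N)!`) for the
generating functions of the two kinds of hypergeometric Euler numbers. Logarithmic
differentiation of `F E = c X^(2N)` gives `F (2N - θ) E = X G E`, hence `Ĥ (2N - θ) E = 2N E²`.
Since `(4N - θ) E² = 2E (2N - θ) E`, applying `4N - θ` and multiplying by `Ĥ` once more yields
`8N² E³ = Ĥ (4N - θ) (Ĥ (2N - θ) E)`, whose coefficients of `Xⁿ/n!` are the two sides.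
-/

open Finset PowerSeries
open scoped Nat

theorem Nat.cast_choose_mul_cast_choose {K : Type*} [Field K] [CharZero K] {n m k : ℕ}
    (hmn : m ≤ n) (hkm : k ≤ m) :
    (n.choose m * m.choose k : K) = n ! / (k ! * (m - k)! * (n - m)!) := by
  have : (m ! : K) ≠ 0 := Nat.cast_ne_zero.mpr m.factorial_ne_zero
  rw [Nat.cast_choose K hmn, Nat.cast_choose K hkm]
  field_simp

namespace PowerSeries

section CommRing

variable {R : Type*} [CommRing R]

variable (R) in
noncomputable def eulerDerivation : Derivation R R⟦X⟧ R⟦X⟧ := (X : R⟦X⟧) • d⁄dX R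

theorem eulerDerivation_apply (f : R⟦X⟧) : eulerDerivation R f = X * d⁄dX R f := rfl

theorem coeff_eulerDerivation (f : R⟦X⟧) (n : ℕ) :
    coeff n (eulerDerivation R f) = n * coeff n f := by
  cases n with
  | zero => simp [eulerDerivation_apply]
  | succ n =>
    rw [eulerDerivation_apply, coeff_succ_X_mul, coeff_derivative, mul_comm]
    push_cast
    ring

theorem coeff_natCast_mul (k : ℕ) (f : R⟦X⟧) (n : ℕ) :
    coeff n ((k : R⟦X⟧) * f) = k * coeff n f := by
  rw [← map_natCast (C (R := R)), coeff_C_mul]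

theorem eulerDerivation_monomial (n : ℕ) (c : R) :
    eulerDerivation R (monomial n c) = n * monomial n c := by
  ext m
  rw [coeff_eulerDerivation, coeff_natCast_mul, coeff_monomial]
  split_ifs with h <;> simp [h]

/-- `(p - θ) f` for the Euler operator `θ = X d/dX`. -/
noncomputable def eulerShift (p : ℕ) (f : R⟦X⟧) : R⟦X⟧ := p * f - eulerDerivation R f

theorem coeff_eulerShift (p : ℕ) (f : R⟦X⟧) (n : ℕ) :
    coeff n (eulerShift p f) = (p - n) * coeff n f := by
  rw [eulerShift, map_sub, coeff_natCast_mul, coeff_eulerDerivation, sub_mul]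

theorem coeff_prod_univ_fin {k : ℕ} (f : Fin k → R⟦X⟧) (n : ℕ) :
    coeff n (∏ j, f j) = ∑ c ∈ Finset.Nat.antidiagonalTuple k n, ∏ j, coeff (c j) (f j) := by
  rw [coeff_prod]
  exact sum_equiv Finsupp.equivFunOnFinite (by simp [Finset.Nat.mem_antidiagonalTuple])
    (by simp)

section IsDomain

variable [IsDomain R] {F G E H : R⟦X⟧} {p : ℕ} {c : R}

theorem eulerShift_mul_eq (hF : F ≠ 0) (hFG : d⁄dX R F = G)
    (hE : F * E = monomial p c) (hH : G * H = d⁄dX R (F * E)) :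
    eulerShift p E * H = p * E ^ 2 := by
  have hθ : eulerDerivation R (F * E) = p * (F * E) := by
    rw [hE, eulerDerivation_monomial]
  have hXGH : X * (G * H) = (p : R⟦X⟧) * (F * E) := by
    rw [hH, ← eulerDerivation_apply, hθ]
  rw [Derivation.leibniz, smul_eq_mul, smul_eq_mul, eulerDerivation_apply F, hFG] at hθ
  apply mul_left_cancel₀ hF
  rw [eulerShift]
  linear_combination E * hXGH - H * hθ

theorem natCast_mul_pow_three_eq (hF : F ≠ 0) (hFG : d⁄dX R F = G)
    (hE : F * E = monomial p c) (hH : G * H = d⁄dX R (F * E)) :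
    ((2 * p ^ 2 : ℕ) : R⟦X⟧) * E ^ 3 = eulerShift (2 * p) (eulerShift p E * H) * H := by
  have h := eulerShift_mul_eq hF hFG hE hH
  rw [h, eulerShift, Derivation.leibniz, Derivation.leibniz_pow, Derivation.map_natCast,
    smul_eq_mul, smul_eq_mul]
  rw [eulerShift] at h
  push_cast
  linear_combination (-2 * p * E) * h

end IsDomain

end CommRing

section Field

variable {K : Type*} [Field K] [CharZero K]

noncomputable def egf (a : ℕ → K) : K⟦X⟧ := mk fun n => a n / n !

theorem factorial_mul_coeff_egf_pow (a : ℕ → K) (k n : ℕ) :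
    (n ! : K) * coeff n (egf a ^ k) =
      ∑ c ∈ Finset.Nat.antidiagonalTuple k n, ((n ! : K) / ∏ j, ((c j)! : K)) * ∏ j, a (c j) := by
  rw [← Fin.prod_const, coeff_prod_univ_fin, mul_sum]
  refine sum_congr rfl fun c _ => ?_
  simp only [egf, coeff_mk, prod_div_distrib]
  ring

theorem factorial_mul_coeff_eulerShift_egf (p q : ℕ) (a b : ℕ → K) (n : ℕ) :
    (n ! : K) * coeff n (eulerShift q (eulerShift p (egf a) * egf b) * egf b) =
      ∑ m ∈ range (n + 1), ∑ k ∈ range (m + 1),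
        (n.choose m : K) * m.choose k * ((q - m) * (p - k)) * a k * b (n - m) * b (m - k) := by
  rw [coeff_mul, Finset.Nat.sum_antidiagonal_eq_sum_range_succ_mk, mul_sum]
  refine sum_congr rfl fun m hm => ?_
  rw [coeff_eulerShift, coeff_mul, Finset.Nat.sum_antidiagonal_eq_sum_range_succ_mk, mul_sum,
    sum_mul, mul_sum]
  refine sum_congr rfl fun k hk => ?_
  simp only [coeff_eulerShift, egf, coeff_mk]
  rw [Nat.cast_choose_mul_cast_choose (by grind) (by grind)]
  have : ((n - m)! : K) ≠ 0 := Nat.cast_ne_zero.mpr (n - m).factorial_ne_zero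
  have : ((m - k)! : K) ≠ 0 := Nat.cast_ne_zero.mpr (m - k).factorial_ne_zero
  have : (k ! : K) ≠ 0 := Nat.cast_ne_zero.mpr k.factorial_ne_zero
  field_simp

theorem derivative_monomial_one_div_factorial (n : ℕ) :
    d⁄dX K (monomial (n + 1) (1 / (n + 1)! : K)) = monomial n (1 / n ! : K) := by
  ext m
  rw [coeff_derivative, coeff_monomial, coeff_monomial]
  by_cases h : m = n
  · subst h
    rw [if_pos rfl, if_pos rfl, Nat.factorial_succ]
    push_cast
    field_simp
  · rw [if_neg (by omega), if_neg h, zero_mul]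

theorem derivative_mk_ite_one_div_factorial (P : ℕ → Prop) [DecidablePred P] :
    d⁄dX K (mk fun m => if P m then (1 / m ! : K) else 0) =
      mk fun m => if P (m + 1) then (1 / m ! : K) else 0 := by
  ext m
  rw [coeff_derivative, coeff_mk, coeff_mk]
  split_ifs
  · rw [Nat.factorial_succ]
    push_cast
    field_simp
  · rw [zero_mul]

variable (K)

/-- `cosh X - ∑_{k < N} X^(2k) / (2k)!`. -/
noncomputable def coshTail (N : ℕ) : K⟦X⟧ :=
  mk fun m => if Even m ∧ 2 * N ≤ m then (1 : K) / m ! else 0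

/-- `sinh X - ∑_{k < N - 1} X^(2k+1) / (2k+1)!`, the tail defining `Ê_{N-1,n}`. -/
noncomputable def sinhTail (N : ℕ) : K⟦X⟧ :=
  mk fun m => if Odd m ∧ 2 * N - 1 ≤ m then (1 : K) / m ! else 0

theorem derivative_coshTail (N : ℕ) : d⁄dX K (coshTail K N) = sinhTail K N := by
  rw [coshTail, sinhTail, derivative_mk_ite_one_div_factorial]
  congr! 4 with m
  rw [Nat.even_add_one, Nat.not_even_iff_odd]
  omega

theorem coshTail_ne_zero (N : ℕ) : coshTail K N ≠ 0 := fun h => by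
  simpa [coshTail, Nat.factorial_ne_zero] using congrArg (coeff (2 * N)) h

end Field

end PowerSeries

/-- For `N ≥ 1` and `n ≥ 0`,
`∑_{i₁+i₂+i₃=n} n!/(i₁!i₂!i₃!) E_{N,i₁}E_{N,i₂}E_{N,i₃}
  = ∑_{m=0}^n ∑_{k=0}^m C(n,m)C(m,k) ((4N-m)(2N-k)/(8N²)) E_{N,k} Ê_{N-1,n-m} Ê_{N-1,m-k}`,
with `E` and `Ê` the (complementary) hypergeometric Euler numbers defined by their
generating functions. -/
theorem hypergeometric_euler_sum_products_three (N : ℕ) (hN : 1 ≤ N) (E Ehat : ℕ → ℝ)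
    (hE : (PowerSeries.mk fun m => if Even m ∧ 2 * N ≤ m then (1 : ℝ) / (Nat.factorial m) else 0) *
        (PowerSeries.mk fun n => E n / (Nat.factorial n)) =
      PowerSeries.monomial (R := ℝ) (2 * N) ((1 : ℝ) / (Nat.factorial (2 * N))))
    (hEhat : (PowerSeries.mk fun m =>
          if Odd m ∧ 2 * N - 1 ≤ m then (1 : ℝ) / (Nat.factorial m) else 0) *
        (PowerSeries.mk fun n => Ehat n / (Nat.factorial n)) =
      PowerSeries.monomial (R := ℝ) (2 * N - 1) ((1 : ℝ) / (Nat.factorial (2 * N - 1)))) :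
    ∀ n : ℕ,
      ∑ c ∈ Finset.Nat.antidiagonalTuple 3 n,
          ((Nat.factorial n : ℝ) / ∏ j, (Nat.factorial (c j) : ℝ)) * ∏ j, E (c j) =
        ∑ m ∈ Finset.range (n + 1), ∑ k ∈ Finset.range (m + 1),
          (Nat.choose n m : ℝ) * (Nat.choose m k : ℝ) *
            (((4 * N : ℝ) - m) * ((2 * N : ℝ) - k) / (8 * (N : ℝ) ^ 2)) *
            E k * Ehat (n - m) * Ehat (m - k) := by
  have hGH : sinhTail ℝ N * egf Ehat = d⁄dX ℝ (coshTail ℝ N * egf E) := by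
    obtain ⟨M, hM⟩ : ∃ M, 2 * N = M + 1 := ⟨2 * N - 1, by omega⟩
    rw [sinhTail, coshTail, egf, egf, hE, hEhat, hM, derivative_monomial_one_div_factorial,
      Nat.add_sub_cancel]
  intro n
  have key := congrArg (coeff n) <| natCast_mul_pow_three_eq (E := egf E)
    (coshTail_ne_zero ℝ N) (derivative_coshTail ℝ N) hE hGH
  rw [coeff_natCast_mul] at key
  have hN0 : (N : ℝ) ≠ 0 := by positivity
  calc _ = (n ! : ℝ) * coeff n (egf E ^ 3) := (factorial_mul_coeff_egf_pow E 3 n).symm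
    _ = (n ! : ℝ) * coeff n (eulerShift (2 * (2 * N))
          (eulerShift (2 * N) (egf E) * egf Ehat) * egf Ehat) / (8 * N ^ 2) := by
      rw [← key]
      push_cast
      field_simp
      ring
    _ = _ := by
      rw [factorial_mul_coeff_eulerShift_egf, sum_div]
      refine sum_congr rfl fun m _ => ?_
      rw [sum_div]
      refine sum_congr rfl fun k _ => ?_
      push_cast
      ring
end

section
/- For N ≥ 0 and n ≥ 1, E_{N,2n} = (2n)! Σ_{t_1+2t_2+⋯+n t_n = n} multinomial(t_1+⋯+t_n; t_1,…,t_n) (-1)^{t_1+⋯+t_n} Π_{j=1}^n ((2N)!/(2N+2j)!)^{t_j}, where the sum is over nonnegative integers t_1,…,t_n with t_1+2t_2+⋯+n t_n = n and multinomial(s; t_1,…,t_n) = s!/(t_1!⋯t_n!). -/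
/-!
Put `f m = E_{N,2m} / (2m)!` and `c k = -(2N)!/(2N+2k)!`. Multiplying the recurrence by `(2N)!`
gives `f 0 = 1` and `f m = ∑_{i<m} c (m-i) f i`, which determines `f`. The Trudi sum
`∑_t multinomial t ∏ c_{j+1}^{t_j}` over partitions `t` of `m` obeys the same recurrence: peeling
off one part, `multinomial t = ∑_{t_j > 0} multinomial (t - e_j)`, and `t ↦ t - e_j` is a bijection
from the partitions of `m` with a part `j + 1` onto the partitions of `m - (j + 1)`.
-/

open Finset
open scoped Nat

lemma Pi.sub_single_one_add_single_one {α : Type*} [DecidableEq α] {t : α → ℕ} {j : α}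
    (h : 0 < t j) : t - Pi.single j 1 + Pi.single j 1 = t := by
  ext i
  rcases eq_or_ne i j with rfl | hij <;> simp [*]
  omega

namespace Nat

variable {α : Type*} [DecidableEq α] {s : Finset α}

theorem add_one_mul_multinomial_add_single {j : α} (hj : j ∈ s) (t : α → ℕ) :
    (t j + 1) * multinomial s (t + Pi.single j 1) = (∑ i ∈ s, t i + 1) * multinomial s t := by
  have hj' : j ∉ s.erase j := notMem_erase j s
  have hrest : ∀ i ∈ s.erase j, (t + Pi.single j 1 : α → ℕ) i = t i := fun i hi => by
    simp [ne_of_mem_erase hi]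
  rw [← insert_erase hj, multinomial_insert hj', multinomial_insert hj', sum_insert hj',
    multinomial_congr hrest, sum_congr rfl hrest]
  simp only [Pi.add_apply, Pi.single_eq_same]
  rw [← mul_assoc, ← mul_assoc, add_right_comm, add_one_mul_choose_eq, mul_comm (t j + 1)]

theorem multinomial_eq_sum_multinomial_sub_single (t : α → ℕ) (ht : ∑ i ∈ s, t i ≠ 0) :
    multinomial s t = ∑ j ∈ s with 0 < t j, multinomial s (t - Pi.single j 1) := by
  have key : ∀ j ∈ s, 0 < t j →
      t j * multinomial s t = (∑ i ∈ s, t i) * multinomial s (t - Pi.single j 1) := by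
    intro j hj htj
    have hadd := Pi.sub_single_one_add_single_one htj
    have hsum : ∑ i ∈ s, (t - Pi.single j 1 : α → ℕ) i + 1 = ∑ i ∈ s, t i := by
      conv_rhs => rw [← hadd]
      simp [sum_add_distrib, sum_pi_single', hj]
    have := add_one_mul_multinomial_add_single hj (t - Pi.single j 1)
    rwa [hadd, hsum, Pi.sub_apply, Pi.single_eq_same, Nat.sub_add_cancel htj] at this
  apply Nat.eq_of_mul_eq_mul_left (Nat.pos_of_ne_zero ht)
  calc (∑ i ∈ s, t i) * multinomial s t
      = ∑ j ∈ s with 0 < t j, t j * multinomial s t := by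
        rw [sum_filter_of_ne (fun j _ h => Nat.pos_of_ne_zero (left_ne_zero_of_mul h)), sum_mul]
    _ = ∑ j ∈ s with 0 < t j, (∑ i ∈ s, t i) * multinomial s (t - Pi.single j 1) :=
        sum_congr rfl fun j hj => key j (mem_filter.1 hj).1 (mem_filter.1 hj).2
    _ = _ := (mul_sum _ _ _).symm

end Nat

section Trudi

variable {R : Type*} [CommSemiring R] {n m : ℕ}

/-- `t j` counts the parts equal to `j + 1`, so `tupleWeight t` is the size of the partition. -/
def tupleWeight (t : Fin n → ℕ) : ℕ := ∑ j : Fin n, ((j : ℕ) + 1) * t j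

def tuplesOfWeight (n m : ℕ) : Finset (Fin n → ℕ) :=
  (Fintype.piFinset fun _ : Fin n => range (m + 1)).filter fun t => tupleWeight t = m

def trudiSum (c : ℕ → R) (n m : ℕ) : R :=
  ∑ t ∈ tuplesOfWeight n m, (Nat.multinomial univ t : R) * ∏ j : Fin n, c (j + 1) ^ t j

lemma mul_le_tupleWeight (t : Fin n → ℕ) (j : Fin n) : ((j : ℕ) + 1) * t j ≤ tupleWeight t :=
  single_le_sum (f := fun j : Fin n => ((j : ℕ) + 1) * t j) (fun _ _ => Nat.zero_le _) (mem_univ j)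

lemma tupleWeight_add_single (t : Fin n → ℕ) (j : Fin n) :
    tupleWeight (t + Pi.single j 1) = tupleWeight t + ((j : ℕ) + 1) := by
  simp [tupleWeight, mul_add, sum_add_distrib, Pi.single_apply]

lemma mem_tuplesOfWeight {t : Fin n → ℕ} : t ∈ tuplesOfWeight n m ↔ tupleWeight t = m := by
  refine ⟨fun h => (mem_filter.1 h).2, fun h => mem_filter.2 ⟨?_, h⟩⟩
  refine Fintype.mem_piFinset.2 fun j => mem_range.2 ?_
  have := mul_le_tupleWeight t j
  nlinarith

lemma tuplesOfWeight_zero : tuplesOfWeight n 0 = {0} := by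
  ext t
  simp [mem_tuplesOfWeight, tupleWeight, sum_eq_zero_iff, funext_iff]

lemma filter_pos_tuplesOfWeight {j : Fin n} (hj : (j : ℕ) < m) :
    {t ∈ tuplesOfWeight n m | 0 < t j} =
      (tuplesOfWeight n (m - (j + 1))).map (addRightEmbedding (Pi.single j 1)) := by
  ext t
  simp only [mem_filter, mem_map, mem_tuplesOfWeight, addRightEmbedding_apply]
  constructor
  · rintro ⟨ht, htj⟩
    have hadd := Pi.sub_single_one_add_single_one htj
    refine ⟨t - Pi.single j 1, ?_, hadd⟩
    have := tupleWeight_add_single (t - Pi.single j 1) j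
    rw [hadd] at this
    omega
  · rintro ⟨s, hs, rfl⟩
    refine ⟨by rw [tupleWeight_add_single]; omega, by simp⟩

lemma filter_pos_tuplesOfWeight_eq_empty {j : Fin n} (hj : m ≤ (j : ℕ)) :
    {t ∈ tuplesOfWeight n m | 0 < t j} = ∅ := by
  refine filter_false_of_mem fun t ht htj => ?_
  have := mul_le_tupleWeight t j
  rw [mem_tuplesOfWeight.1 ht] at this
  nlinarith

variable (c : ℕ → R)

lemma trudiSum_zero_right : trudiSum c n 0 = 1 := by
  simp [trudiSum, tuplesOfWeight_zero, Nat.multinomial]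

lemma prod_pow_add_single (s : Fin n → ℕ) (j : Fin n) :
    ∏ k : Fin n, c (k + 1) ^ (s + Pi.single j 1 : Fin n → ℕ) k =
      c (j + 1) * ∏ k : Fin n, c (k + 1) ^ s k := by
  simp only [Pi.add_apply, pow_add, prod_mul_distrib, Pi.single_apply, pow_ite, pow_one, pow_zero,
    prod_ite_eq', mem_univ, if_true, mul_comm]

lemma sum_filter_pos_tuplesOfWeight {j : Fin n} (hj : (j : ℕ) < m) :
    ∑ t ∈ tuplesOfWeight n m with 0 < t j,
        (Nat.multinomial univ (t - Pi.single j 1) : R) * ∏ k : Fin n, c (k + 1) ^ t k =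
      c (j + 1) * trudiSum c n (m - (j + 1)) := by
  rw [filter_pos_tuplesOfWeight hj, sum_map, trudiSum, mul_sum]
  refine sum_congr rfl fun s _ => ?_
  rw [addRightEmbedding_apply, add_tsub_cancel_right, prod_pow_add_single]
  ring

lemma trudiSum_eq_sum_filter (hm : m ≠ 0) :
    trudiSum c n m =
      ∑ j ∈ univ.filter (fun j : Fin n => (j : ℕ) < m), c (j + 1) * trudiSum c n (m - (j + 1)) := by
  have hdecr : ∀ t ∈ tuplesOfWeight n m, (Nat.multinomial univ t : R) =
      ∑ j : Fin n, if 0 < t j then (Nat.multinomial univ (t - Pi.single j 1) : R) else 0 := by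
    intro t ht
    have hpos : ∑ j, t j ≠ 0 := by
      rintro h
      rw [sum_eq_zero_iff] at h
      simp [mem_tuplesOfWeight, tupleWeight, h] at ht
      exact hm ht.symm
    rw [Nat.multinomial_eq_sum_multinomial_sub_single t hpos, Nat.cast_sum, sum_filter]
  calc trudiSum c n m
      = ∑ j : Fin n, ∑ t ∈ tuplesOfWeight n m with 0 < t j,
          (Nat.multinomial univ (t - Pi.single j 1) : R) * ∏ k : Fin n, c (k + 1) ^ t k := by
        simp_rw [sum_filter]
        rw [sum_comm, trudiSum]
        refine sum_congr rfl fun t ht => ?_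
        rw [hdecr t ht, sum_mul]
        simp_rw [ite_mul, zero_mul]
    _ = _ := by
        rw [sum_filter]
        refine sum_congr rfl fun j _ => ?_
        split_ifs with hj
        · exact sum_filter_pos_tuplesOfWeight c hj
        · rw [filter_pos_tuplesOfWeight_eq_empty (not_lt.1 hj), sum_empty]

lemma trudiSum_eq_sum_range (hm : m ≠ 0) (hmn : m ≤ n) :
    trudiSum c n m = ∑ i ∈ range m, c (m - i) * trudiSum c n i := by
  have hrange : (range n).filter (· < m) = range m := by
    ext k
    simp only [mem_filter, mem_range]
    omega
  rw [trudiSum_eq_sum_filter c hm, sum_filter,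
    Fin.sum_univ_eq_sum_range
      (fun k => if k < m then c (k + 1) * trudiSum c n (m - (k + 1)) else 0),
    ← sum_filter, hrange, ← sum_range_reflect]
  refine sum_congr rfl fun k hk => ?_
  have hk := mem_range.1 hk
  rw [show m - 1 - k + 1 = m - k by omega, show m - (m - k) = k by omega]

theorem eq_trudiSum_of_eq_sum_range {f : ℕ → R} (h0 : f 0 = 1)
    (hf : ∀ m, m ≠ 0 → f m = ∑ i ∈ range m, c (m - i) * f i) (hmn : m ≤ n) :
    f m = trudiSum c n m := by
  induction m using Nat.strong_induction_on with
  | _ m ih =>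
    rcases eq_or_ne m 0 with rfl | hm
    · rw [h0, trudiSum_zero_right]
    · rw [hf m hm, trudiSum_eq_sum_range c hm hmn]
      exact sum_congr rfl fun i hi => by
        rw [ih i (mem_range.1 hi) (by have := mem_range.1 hi; omega)]

end Trudi

theorem div_factorial_eq_sum_of_hypergeometricEuler (N : ℕ) {E : ℕ → ℝ}
    (hrec : ∀ n : ℕ, 2 ≤ n → Even n →
      ∑ i ∈ Finset.range (n / 2 + 1),
        E (2 * i) / ((Nat.factorial (2 * N + n - 2 * i) : ℝ) * (Nat.factorial (2 * i))) = 0)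
    {m : ℕ} (hm : m ≠ 0) :
    E (2 * m) / (2 * m)! =
      ∑ i ∈ range m, -((2 * N)! / (2 * N + 2 * (m - i))! : ℝ) * (E (2 * i) / (2 * i)!) := by
  have hr := hrec (2 * m) (by omega) (even_two_mul m)
  rw [show 2 * m / 2 = m by omega, sum_range_succ,
    show 2 * N + 2 * m - 2 * m = 2 * N by omega] at hr
  calc E (2 * m) / (2 * m)!
      = -(2 * N)! * -(E (2 * m) / ((2 * N)! * (2 * m)!)) := by field_simp
    _ = -(2 * N)! * ∑ i ∈ range m, E (2 * i) / ((2 * N + 2 * m - 2 * i)! * (2 * i)!) := by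
        rw [eq_neg_of_add_eq_zero_right hr, neg_neg]
    _ = _ := by
        rw [mul_sum]
        refine sum_congr rfl fun i hi => ?_
        rw [show 2 * N + 2 * m - 2 * i = 2 * N + 2 * (m - i) by have := mem_range.1 hi; omega]
        ring

theorem hypergeometric_euler_trudi_general (N : ℕ) (E : ℕ → ℝ)
    (h0 : E 0 = 1)
    (hrec : ∀ n : ℕ, 2 ≤ n → Even n →
      ∑ i ∈ Finset.range (n / 2 + 1),
        E (2 * i) / ((Nat.factorial (2 * N + n - 2 * i) : ℝ) * (Nat.factorial (2 * i))) = 0) :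
    ∀ n : ℕ, 1 ≤ n →
      E (2 * n) = (Nat.factorial (2 * n) : ℝ) *
        ∑ t ∈ (Fintype.piFinset fun _ : Fin n => Finset.range (n + 1)).filter
            (fun t => ∑ j : Fin n, ((j : ℕ) + 1) * t j = n),
          (Nat.multinomial Finset.univ t : ℝ) * (-1 : ℝ) ^ (∑ j : Fin n, t j) *
            ∏ j : Fin n,
              ((Nat.factorial (2 * N) : ℝ) /
                (Nat.factorial (2 * N + 2 * ((j : ℕ) + 1)) : ℝ)) ^ (t j) := by
  intro n _
  have htrudi : E (2 * n) / (2 * n)! =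
      trudiSum (fun k => -((2 * N)! / (2 * N + 2 * k)! : ℝ)) n n :=
    eq_trudiSum_of_eq_sum_range _ (f := fun m => E (2 * m) / (2 * m)!) (by simp [h0])
      (fun m hm => div_factorial_eq_sum_of_hypergeometricEuler N hrec hm) le_rfl
  rw [← mul_div_cancel₀ (E (2 * n)) (by positivity : ((2 * n)! : ℝ) ≠ 0), htrudi, trudiSum]
  congr 1
  refine sum_congr rfl fun t _ => ?_
  rw [mul_assoc, ← prod_pow_eq_pow_sum, ← prod_mul_distrib]
  exact congrArg _ (prod_congr rfl fun j _ => neg_pow _ _)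

/-- Trudi-formula expression: for `N ≥ 0` and `n ≥ 1`,
`E_{N,2n} = (2n)! ∑_{t₁+2t₂+⋯+ntₙ = n} multinomial(t₁+⋯+tₙ; t₁,…,tₙ) (-1)^{t₁+⋯+tₙ}
∏_{j=1}^n ((2N)!/(2N+2j)!)^{t_j}`, the hypergeometric Euler numbers being defined by
`E_{N,0}=1`, the recurrence, and `E_{N,n}=0` for odd `n`. -/
theorem hypergeometric_euler_trudi (N : ℕ) (E : ℕ → ℝ)
    (h0 : E 0 = 1)
    (hodd : ∀ n : ℕ, Odd n → E n = 0)
    (hrec : ∀ n : ℕ, 2 ≤ n → Even n →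
      ∑ i ∈ Finset.range (n / 2 + 1),
        E (2 * i) / ((Nat.factorial (2 * N + n - 2 * i) : ℝ) * (Nat.factorial (2 * i))) = 0) :
    ∀ n : ℕ, 1 ≤ n →
      E (2 * n) = (Nat.factorial (2 * n) : ℝ) *
        ∑ t ∈ (Fintype.piFinset fun _ : Fin n => Finset.range (n + 1)).filter
            (fun t => ∑ j : Fin n, ((j : ℕ) + 1) * t j = n),
          (Nat.multinomial Finset.univ t : ℝ) * (-1 : ℝ) ^ (∑ j : Fin n, t j) *
            ∏ j : Fin n,
              ((Nat.factorial (2 * N) : ℝ) /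
                (Nat.factorial (2 * N + 2 * ((j : ℕ) + 1)) : ℝ)) ^ (t j) :=
  hypergeometric_euler_trudi_general N E h0 hrec
end
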